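/- arXiv:1703.02088 — 7 statements merged into one kernel-verified Lean document; each statement's English description precedes it below -/
import Mathlib

section
/- Let X be a Poisson random variable with parameter λ > 0. Then for every real x with 0 < x ≤ λ^{1/2}, P(X < λ − x·λ^{1/2}) ≤ e^{−x²/2}. -/
/-!
Chernoff's method: for `θ ≥ 0`, `P(X < a) ≤ e^{θa} E[e^{-θX}] = exp(θa + λ(e^{-θ} - 1))`.
Bounding `e^{-θ} ≤ 1 - θ + θ²/2` and choosing `θ = x/√λ`, `a = λ - x√λ` makes the exponent
`-x²/2`.
-/

open MeasureTheory ProbabilityTheory Real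

namespace Real

theorem one_le_exp_mul_one_sub_add_sq_div_two {t : ℝ} (ht : 0 ≤ t) :
    1 ≤ exp t * (1 - t + t ^ 2 / 2) := by
  let h : ℝ → ℝ := fun s => exp s * (1 - s + s ^ 2 / 2)
  have hderiv : ∀ s, HasDerivAt h (exp s * (s ^ 2 / 2)) s := fun s =>
    ((hasDerivAt_exp s).mul (((hasDerivAt_id' s).const_sub 1).add
      ((hasDerivAt_pow 2 s).div_const 2))).congr_deriv (by simp only [Pi.add_apply]; ring)
  have hmono : Monotone h := monotone_of_deriv_nonneg
    (fun s => (hderiv s).differentiableAt) fun s => (hderiv s).deriv ▸ by positivity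
  simpa [h] using hmono ht

theorem exp_neg_le_one_sub_add_sq_div_two {t : ℝ} (ht : 0 ≤ t) :
    exp (-t) ≤ 1 - t + t ^ 2 / 2 := by
  rw [exp_neg, inv_le_iff_one_le_mul₀' (exp_pos t)]
  exact one_le_exp_mul_one_sub_add_sq_div_two ht

end Real

theorem hasSum_poisson_mgf (lam s : ℝ) :
    HasSum (fun k : ℕ => exp (s * k) * (exp (-lam) * lam ^ k / k.factorial))
      (exp (lam * (exp s - 1))) := by
  have h := (NormedSpace.expSeries_div_hasSum_exp (lam * exp s)).mul_left (exp (-lam))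
  rw [← exp_eq_exp_ℝ, ← exp_add] at h
  have hterm : (fun k : ℕ => exp (s * k) * (exp (-lam) * lam ^ k / k.factorial)) =
      fun k => exp (-lam) * ((lam * exp s) ^ k / k.factorial) := by
    ext k
    rw [mul_pow, ← exp_nat_mul]
    ring_nf
  rwa [hterm, show lam * (exp s - 1) = -lam + lam * exp s by ring]

theorem measure_natCast_lt_le_exp_mul_of_hasSum {Ω : Type*} [MeasurableSpace Ω]
    {μ : Measure Ω} {X : Ω → ℕ} {p : ℕ → ℝ}
    (hp : ∀ k, μ {ω | X ω = k} = ENNReal.ofReal (p k)) (hp0 : ∀ k, 0 ≤ p k)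
    {θ M : ℝ} (hθ : 0 ≤ θ) (hM : HasSum (fun k : ℕ => exp (-θ * k) * p k) M) (a : ℝ) :
    μ {ω | (X ω : ℝ) < a} ≤ ENNReal.ofReal (exp (θ * a) * M) := by
  set S : Set ℕ := {k | (k : ℝ) < a}
  have hunion : {ω | (X ω : ℝ) < a} = ⋃ k ∈ S, {ω | X ω = k} := by ext; simp [S]
  have hweight : ∀ k ∈ S, p k ≤ exp (θ * a) * (exp (-θ * k) * p k) := by
    intro k hk
    rw [← mul_assoc, ← exp_add]
    exact le_mul_of_one_le_left (hp0 k) (one_le_exp (by nlinarith [show (k : ℝ) < a from hk]))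
  have hM' := hM.mul_left (exp (θ * a))
  calc μ {ω | (X ω : ℝ) < a}
      ≤ ∑' k : S, μ {ω | X ω = k} := hunion ▸ measure_biUnion_le μ S.to_countable _
    _ = ∑' k : S, ENNReal.ofReal (p k) := by simp_rw [hp]
    _ ≤ ∑' k : S, ENNReal.ofReal (exp (θ * a) * (exp (-θ * k) * p k)) :=
        ENNReal.tsum_le_tsum fun k => ENNReal.ofReal_le_ofReal (hweight k k.2)
    _ ≤ ∑' k : ℕ, ENNReal.ofReal (exp (θ * a) * (exp (-θ * k) * p k)) :=
        ENNReal.tsum_comp_le_tsum_of_injective Subtype.coe_injective _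
    _ = ENNReal.ofReal (exp (θ * a) * M) := by
        rw [← ENNReal.ofReal_tsum_of_nonneg (fun k => by have := hp0 k; positivity) hM'.summable,
          hM'.tsum_eq]

theorem poisson_lower_md_general {Ω : Type*} [MeasurableSpace Ω]
    (μ : Measure Ω)
    (X : Ω → ℕ) (lam : ℝ) (hlam : 0 < lam)
    (hpois : ∀ k : ℕ,
      μ {ω | X ω = k} = ENNReal.ofReal (Real.exp (-lam) * lam ^ k / (Nat.factorial k)))
    (x : ℝ) (hx0 : 0 < x) :
    μ {ω | (X ω : ℝ) < lam - x * Real.sqrt lam} ≤ ENNReal.ofReal (Real.exp (-x ^ 2 / 2)) := by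
  set s := Real.sqrt lam
  have hs : 0 < s := Real.sqrt_pos.2 hlam
  have hlam_eq : lam = s ^ 2 := (Real.sq_sqrt hlam.le).symm
  have hθ : 0 ≤ x / s := by positivity
  have hexp : lam * (exp (-(x / s)) - 1) ≤ -x * s + x ^ 2 / 2 := by
    calc lam * (exp (-(x / s)) - 1) ≤ s ^ 2 * (-(x / s) + (x / s) ^ 2 / 2) := by
          rw [hlam_eq]
          gcongr
          linarith [exp_neg_le_one_sub_add_sq_div_two hθ]
      _ = -x * s + x ^ 2 / 2 := by field_simp
  calc μ {ω | (X ω : ℝ) < lam - x * s}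
      ≤ ENNReal.ofReal (exp (x / s * (lam - x * s)) * exp (lam * (exp (-(x / s)) - 1))) :=
        measure_natCast_lt_le_exp_mul_of_hasSum hpois (fun k => by positivity)
          hθ (hasSum_poisson_mgf lam _) _
    _ ≤ ENNReal.ofReal (exp (-x ^ 2 / 2)) := by
        refine ENNReal.ofReal_le_ofReal ?_
        rw [← exp_add, exp_le_exp]
        have hlin : x / s * (lam - x * s) = x * s - x ^ 2 := by
          rw [hlam_eq]; field_simp
        linarith

/-- Poisson moderate-deviation lower-tail bound: for `0 < x ≤ √λ`,
`P(X < λ − x√λ) ≤ e^{−x²/2}`. -/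
theorem poisson_lower_md {Ω : Type*} [MeasurableSpace Ω]
    (μ : Measure Ω) [IsProbabilityMeasure μ]
    (X : Ω → ℕ) (hX : Measurable X) (lam : ℝ) (hlam : 0 < lam)
    (hpois : ∀ k : ℕ,
      μ {ω | X ω = k} = ENNReal.ofReal (Real.exp (-lam) * lam ^ k / (Nat.factorial k)))
    (x : ℝ) (hx0 : 0 < x) (hx1 : x ≤ Real.sqrt lam) :
    μ {ω | (X ω : ℝ) < lam - x * Real.sqrt lam} ≤ ENNReal.ofReal (Real.exp (-x ^ 2 / 2)) :=
  poisson_lower_md_general μ X lam hlam hpois x hx0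
end

section
/- Let ξ be a Poisson random variable with parameter λ > 0 and let α ∈ (0, 1/2]. Then E[(1 + ξ)^{−1}] ≤ (1+λ)^{−1} + (1+λ)^{−3/2+α} + e^{−λ^{2α}/8}. -/
/-!
The expectation is explicit: `E[(1 + ξ)⁻¹] = ∑ e^{-λ} λ^k / (k + 1)! = (1 - e^{-λ}) / λ`.
For `λ ≤ 2` this is at most `1`, while `(1 + λ)⁻¹ ≥ 1/3` and, as `λ^{2α} ≤ 2`, the exponential
term is at least `3/4`. For `λ ≥ 2` it is at most `1/λ = 1/(1 + λ) + 1/(λ(1 + λ))`, and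
`λ ≥ √(1 + λ)` bounds the last term by `(1 + λ)^{-3/2}`.
-/

open MeasureTheory ProbabilityTheory Real
open scoped NNReal Nat

lemma hasSum_pow_div_factorial_mul_inv_one_add {x : ℝ} (hx : x ≠ 0) :
    HasSum (fun n : ℕ ↦ x ^ n / n ! * (1 + (n : ℝ))⁻¹) ((exp x - 1) / x) := by
  have hshift : HasSum (fun n : ℕ ↦ x ^ (n + 1) / (n + 1)!) (exp x - 1) := by
    have := (hasSum_nat_add_iff' 1).2 (NormedSpace.expSeries_div_hasSum_exp x)
    simpa [← exp_eq_exp_ℝ] using this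
  have hterm : (fun n : ℕ ↦ x ^ n / n ! * (1 + (n : ℝ))⁻¹) =
      fun n : ℕ ↦ x ^ (n + 1) / (n + 1)! / x := by
    funext n
    rw [Nat.factorial_succ, pow_succ]
    push_cast
    field_simp
    ring
  rw [hterm]
  exact hshift.div_const x

lemma integral_inv_one_add_poissonMeasure {r : ℝ≥0} (hr : r ≠ 0) :
    ∫ n, (1 + (n : ℝ))⁻¹ ∂Po(r) = (1 - exp (-r)) / r := by
  rw [integral_poissonMeasure]
  simp_rw [smul_eq_mul, mul_div_assoc, mul_assoc]
  rw [tsum_mul_left, (hasSum_pow_div_factorial_mul_inv_one_add (by exact_mod_cast hr)).tsum_eq,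
    mul_div_assoc', mul_sub, ← exp_add, neg_add_cancel, exp_zero, mul_one]

lemma map_eq_poissonMeasure {Ω : Type*} [MeasurableSpace Ω] {μ : Measure Ω} {ξ : Ω → ℕ}
    (hξ : Measurable ξ) {r : ℝ≥0}
    (hpois : ∀ k : ℕ, μ {ω | ξ ω = k} = ENNReal.ofReal (exp (-r) * r ^ k / k !)) :
    μ.map ξ = Po(r) :=
  Measure.ext_of_singleton fun k ↦ by
    rw [Measure.map_apply hξ (measurableSet_singleton k), poissonMeasure_singleton]
    exact hpois k

lemma one_sub_exp_neg_div_le_one {x : ℝ} (hx : 0 < x) : (1 - exp (-x)) / x ≤ 1 := by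
  rw [div_le_one hx]
  linarith [add_one_le_exp (-x)]

lemma one_sub_exp_neg_div_le_inv {x : ℝ} (hx : 0 < x) : (1 - exp (-x)) / x ≤ x⁻¹ := by
  rw [inv_eq_one_div]
  gcongr
  linarith [exp_pos (-x)]

lemma inv_mul_one_add_le_rpow {x : ℝ} (hx : 2 ≤ x) :
    (x * (1 + x))⁻¹ ≤ (1 + x) ^ (-(3 : ℝ) / 2) := by
  have h1x : 0 < 1 + x := by linarith
  have hsqrt : √(1 + x) ≤ x := (sqrt_le_left (by linarith)).2 (by nlinarith)
  have hpow : (1 + x) ^ ((3 : ℝ) / 2) = (1 + x) * √(1 + x) := by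
    rw [sqrt_eq_rpow, ← rpow_one_add' h1x.le (by norm_num)]
    norm_num
  rw [neg_div, rpow_neg h1x.le, hpow, mul_comm x]
  gcongr

lemma one_sub_exp_neg_div_le {x α : ℝ} (hx : 0 < x) (hα0 : 0 < α) (hα1 : α ≤ 1 / 2) :
    (1 - exp (-x)) / x ≤ (1 + x)⁻¹ + (1 + x) ^ (-(3 : ℝ) / 2 + α) + exp (-x ^ (2 * α) / 8) := by
  have hrpow_nonneg : 0 ≤ (1 + x) ^ (-(3 : ℝ) / 2 + α) := by positivity
  rcases le_or_gt x 2 with hx2 | hx2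
  · have hpow : x ^ (2 * α) ≤ 2 :=
      calc x ^ (2 * α) ≤ 2 ^ (2 * α) := by gcongr
        _ ≤ 2 ^ (1 : ℝ) := rpow_le_rpow_of_exponent_le (by norm_num) (by linarith)
        _ = 2 := rpow_one 2
    have hexp : 3 / 4 ≤ exp (-x ^ (2 * α) / 8) := by
      linarith [add_one_le_exp (-x ^ (2 * α) / 8)]
    have hinv : 1 / 3 ≤ (1 + x)⁻¹ := by
      rw [one_div]
      exact inv_anti₀ (by linarith) (by linarith)
    linarith [one_sub_exp_neg_div_le_one hx]
  · have hsplit : x⁻¹ = (1 + x)⁻¹ + (x * (1 + x))⁻¹ := by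
      field_simp
      ring
    have hmono : (1 + x) ^ (-(3 : ℝ) / 2) ≤ (1 + x) ^ (-(3 : ℝ) / 2 + α) :=
      rpow_le_rpow_of_exponent_le (by linarith) (by linarith)
    linarith [one_sub_exp_neg_div_le_inv hx, inv_mul_one_add_le_rpow hx2.le,
      exp_pos (-x ^ (2 * α) / 8)]

theorem poisson_recip_moment_general {Ω : Type*} [MeasurableSpace Ω]
    (μ : Measure Ω)
    (ξ : Ω → ℕ) (hξ : Measurable ξ) (lam : ℝ) (hlam : 0 < lam)
    (hpois : ∀ k : ℕ,
      μ {ω | ξ ω = k} = ENNReal.ofReal (Real.exp (-lam) * lam ^ k / (Nat.factorial k)))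
    (α : ℝ) (hα0 : 0 < α) (hα1 : α ≤ 1 / 2) :
    ∫ ω, ((1 : ℝ) + (ξ ω : ℝ))⁻¹ ∂μ ≤
      (1 + lam)⁻¹ + (1 + lam) ^ (-(3:ℝ) / 2 + α) + Real.exp (-lam ^ (2 * α) / 8) := by
  lift lam to ℝ≥0 using hlam.le
  calc ∫ ω, ((1 : ℝ) + (ξ ω : ℝ))⁻¹ ∂μ = ∫ n, (1 + (n : ℝ))⁻¹ ∂(μ.map ξ) :=
        (integral_map hξ.aemeasurable
          (measurable_of_countable fun n : ℕ ↦ (1 + (n : ℝ))⁻¹).aestronglyMeasurable).symm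
    _ = (1 - exp (-lam)) / lam := by
        rw [map_eq_poissonMeasure hξ hpois,
          integral_inv_one_add_poissonMeasure (by exact_mod_cast hlam.ne')]
    _ ≤ _ := one_sub_exp_neg_div_le hlam hα0 hα1

/-- Reciprocal moment bound for a Poisson(λ) random variable: for `α ∈ (0,1/2]`,
`E[(1+ξ)⁻¹] ≤ (1+λ)⁻¹ + (1+λ)^{−3/2+α} + e^{−λ^{2α}/8}`. -/
theorem poisson_recip_moment {Ω : Type*} [MeasurableSpace Ω]
    (μ : Measure Ω) [IsProbabilityMeasure μ]
    (ξ : Ω → ℕ) (hξ : Measurable ξ) (lam : ℝ) (hlam : 0 < lam)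
    (hpois : ∀ k : ℕ,
      μ {ω | ξ ω = k} = ENNReal.ofReal (Real.exp (-lam) * lam ^ k / (Nat.factorial k)))
    (α : ℝ) (hα0 : 0 < α) (hα1 : α ≤ 1 / 2) :
    ∫ ω, ((1 : ℝ) + (ξ ω : ℝ))⁻¹ ∂μ ≤
      (1 + lam)⁻¹ + (1 + lam) ^ (-(3:ℝ) / 2 + α) + Real.exp (-lam ^ (2 * α) / 8) :=
  poisson_recip_moment_general μ ξ hξ lam hlam hpois α hα0 hα1
end

section
/- Let a ∈ ℝ, β > 0, c > 0, and x > 0 satisfy 1 + a − β ≥ 0 and c·β − (1 + a − β)·x^{−β} > 0. Then ∫ₓ^∞ t^a e^{−c t^β} dt ≤ (c·β − (1 + a − β)·x^{−β})^{−1} · x^{1+a−β} · e^{−c x^β}. -/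
/-!
With `K = cβ − (1+a−β)x^{−β}`, the coefficient `cβ − (1+a−β)t^{−β}` increases in `t`, so on
`(x, ∞)` the integrand `t^a e^{−ct^β}` is at most `K⁻¹` times the derivative of
`−t^{1+a−β} e^{−ct^β}`, a function tending to `0` at infinity.
-/

open MeasureTheory Filter Topology Set

theorem setIntegral_Ioi_le_of_le_deriv {f g g' : ℝ → ℝ} {x l : ℝ}
    (hderiv : ∀ t ∈ Ici x, HasDerivAt g (g' t) t) (hg : Tendsto g atTop (𝓝 l))
    (hf_meas : AEStronglyMeasurable f (volume.restrict (Ioi x)))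
    (hf_nonneg : ∀ t ∈ Ioi x, 0 ≤ f t) (hf_le : ∀ t ∈ Ioi x, f t ≤ g' t) :
    ∫ t in Ioi x, f t ≤ l - g x := by
  have hg'_nonneg : ∀ t ∈ Ioi x, 0 ≤ g' t := fun t ht => (hf_nonneg t ht).trans (hf_le t ht)
  have hg'_int : IntegrableOn g' (Ioi x) := integrableOn_Ioi_deriv_of_nonneg' hderiv hg'_nonneg hg
  have hf_int : IntegrableOn f (Ioi x) := by
    refine hg'_int.mono' hf_meas ?_
    filter_upwards [ae_restrict_mem measurableSet_Ioi] with t ht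
    rw [Real.norm_of_nonneg (hf_nonneg t ht)]
    exact hf_le t ht
  calc ∫ t in Ioi x, f t ≤ ∫ t in Ioi x, g' t :=
        setIntegral_mono_on hf_int hg'_int measurableSet_Ioi hf_le
    _ = l - g x := integral_Ioi_of_hasDerivAt_of_nonneg' hderiv hg'_nonneg hg

theorem hasDerivAt_rpow_mul_exp_neg_mul_rpow (a β c : ℝ) {t : ℝ} (ht : 0 < t) :
    HasDerivAt (fun t => t ^ (1 + a - β) * Real.exp (-c * t ^ β))
      (((1 + a - β) * t ^ (-β) - c * β) * (t ^ a * Real.exp (-c * t ^ β))) t := by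
  have hpow : HasDerivAt (fun t : ℝ => t ^ (1 + a - β)) ((1 + a - β) * t ^ (1 + a - β - 1)) t :=
    Real.hasDerivAt_rpow_const (Or.inl ht.ne')
  have hexp : HasDerivAt (fun t : ℝ => Real.exp (-c * t ^ β))
      (Real.exp (-c * t ^ β) * (-c * (β * t ^ (β - 1)))) t :=
    ((Real.hasDerivAt_rpow_const (Or.inl ht.ne')).const_mul (-c)).exp
  refine (hpow.mul hexp).congr_deriv ?_
  have e1 : t ^ (1 + a - β - 1) = t ^ a * t ^ (-β) := by
    rw [← Real.rpow_add ht]; ring_nf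
  have e2 : t ^ (1 + a - β) * t ^ (β - 1) = t ^ a := by
    rw [← Real.rpow_add ht]; ring_nf
  rw [e1]
  linear_combination (-(c * β * Real.exp (-c * t ^ β))) * e2

theorem tendsto_rpow_mul_exp_neg_mul_rpow_atTop_nhds_zero (p : ℝ) {β c : ℝ} (hβ : 0 < β)
    (hc : 0 < c) : Tendsto (fun t => t ^ p * Real.exp (-c * t ^ β)) atTop (𝓝 0) := by
  have h := (tendsto_rpow_mul_exp_neg_mul_atTop_nhds_zero (p / β) c hc).comp
    (tendsto_rpow_atTop hβ)
  refine h.congr' ?_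
  filter_upwards [eventually_gt_atTop 0] with t ht
  simp only [Function.comp_apply, ← Real.rpow_mul ht.le, mul_div_cancel₀ p hβ.ne']

/-- Tail estimate for integrals `∫ₓ^∞ t^a e^{−ct^β} dt`: if `1 + a − β ≥ 0` and
`cβ − (1+a−β)x^{−β} > 0`, then
`∫ₓ^∞ t^a e^{−ct^β} dt ≤ (cβ − (1+a−β)x^{−β})⁻¹ x^{1+a−β} e^{−cx^β}`. -/
theorem exp_tail_integral_bound (a β c x : ℝ) (hβ : 0 < β) (hc : 0 < c) (hx : 0 < x)
    (h1 : 0 ≤ 1 + a - β) (h2 : 0 < c * β - (1 + a - β) * x ^ (-β)) :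
    ∫ t in Set.Ioi x, t ^ a * Real.exp (-c * t ^ β) ≤
      (c * β - (1 + a - β) * x ^ (-β))⁻¹ * x ^ (1 + a - β) * Real.exp (-c * x ^ β) := by
  set K := c * β - (1 + a - β) * x ^ (-β)
  set F : ℝ → ℝ := fun t => t ^ (1 + a - β) * Real.exp (-c * t ^ β)
  have hK_le : ∀ t ∈ Ioi x, K ≤ c * β - (1 + a - β) * t ^ (-β) := fun t ht => by
    have := Real.rpow_le_rpow_of_nonpos hx (le_of_lt ht) (neg_nonpos.mpr hβ.le)
    linarith [mul_le_mul_of_nonneg_left this h1]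
  have hderiv : ∀ t ∈ Ici x, HasDerivAt (fun t => -(F t / K))
      (-(((1 + a - β) * t ^ (-β) - c * β) * (t ^ a * Real.exp (-c * t ^ β)) / K)) t :=
    fun t ht => ((hasDerivAt_rpow_mul_exp_neg_mul_rpow a β c (hx.trans_le ht)).div_const K).neg
  have hlim : Tendsto (fun t => -(F t / K)) atTop (𝓝 0) := by
    simpa only [zero_div, neg_zero] using
      ((tendsto_rpow_mul_exp_neg_mul_rpow_atTop_nhds_zero (1 + a - β) hβ hc).div_const K).neg
  have hf_nonneg : ∀ t ∈ Ioi x, 0 ≤ t ^ a * Real.exp (-c * t ^ β) := fun t ht =>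
    mul_nonneg (Real.rpow_nonneg (hx.trans ht).le a) (Real.exp_pos _).le
  have hbound := setIntegral_Ioi_le_of_le_deriv hderiv hlim (by fun_prop) hf_nonneg
    fun t ht => by
      rw [← neg_div, le_div_iff₀ h2]
      linarith [mul_le_mul_of_nonneg_left (hK_le t ht) (hf_nonneg t ht)]
  simpa [F, div_eq_inv_mul, mul_assoc] using hbound
end

section
/- Let (s_j)_{j≥1} be an i.i.d. sequence of exponential random variables with rate 1, and for t ≥ 0 let N_t = #{i ≥ 1 : s_1 + ⋯ + s_i ≤ t} (a Poisson process with intensity 1). Then for every T > 0, P(there exists t ≥ 0 with N_t ≥ 2·max(t, T)) ≤ e^{−T/4}. -/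
/-! The product `M n = ∏_{j ≤ n} 2 e^{-s_j}` has independent factors of mean one
(`E e^{-s} = 1/2` for `s ~ Exp(1)`), so it is a nonnegative martingale and Ville's maximal
inequality gives `P(∃ n, M n ≥ e^{T/4}) ≤ e^{-T/4}`. If `N_t ≥ 2 max(t, T)`, the largest index `n`
counted by `N_t` satisfies `n + 1 ≥ 2T` and `s_0 + ⋯ + s_n ≤ t ≤ (n + 1)/2`, hence
`M n ≥ 2^{n+1} e^{-(n+1)/2} ≥ e^{(n+1)/8} ≥ e^{T/4}`, because `log 2 - 1/2 > 1/8`. -/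

open MeasureTheory ProbabilityTheory Finset

namespace ProbabilityTheory

variable {r t : ℝ}

lemma exponentialPDF_mul_exp_mul (htr : t < r) (x : ℝ) :
    exponentialPDF r x * ENNReal.ofReal (Real.exp (t * x)) =
      ENNReal.ofReal (r / (r - t)) * exponentialPDF (r - t) x := by
  simp only [exponentialPDF_eq]
  have hrt : 0 < r - t := sub_pos.mpr htr
  split_ifs
  · rw [← ENNReal.ofReal_mul' (by positivity), ← ENNReal.ofReal_mul' (by positivity)]
    congr 1
    rw [div_mul_eq_mul_div, mul_assoc, ← Real.exp_add, eq_div_iff hrt.ne']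
    ring_nf
  · simp

lemma lintegral_exp_mul_expMeasure (htr : t < r) :
    ∫⁻ x, ENNReal.ofReal (Real.exp (t * x)) ∂expMeasure r = ENNReal.ofReal (r / (r - t)) := by
  rw [show expMeasure r = volume.withDensity (exponentialPDF r) from rfl,
    lintegral_withDensity_eq_lintegral_mul _ (f := exponentialPDF r)
      (measurable_exponentialPDFReal r).ennreal_ofReal (by fun_prop)]
  simp only [Pi.mul_apply, exponentialPDF_mul_exp_mul htr]
  rw [lintegral_const_mul' _ _ ENNReal.ofReal_ne_top,
    lintegral_exponentialPDF_eq_one (sub_pos.mpr htr), mul_one]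

lemma integrable_exp_mul_expMeasure (htr : t < r) :
    Integrable (fun x => Real.exp (t * x)) (expMeasure r) := by
  refine (lintegral_ofReal_ne_top_iff_integrable (by fun_prop)
    (.of_forall fun x => (Real.exp_pos _).le)).mp ?_
  rw [lintegral_exp_mul_expMeasure htr]
  exact ENNReal.ofReal_ne_top

lemma mgf_id_expMeasure (hr : 0 ≤ r) (htr : t < r) : mgf id (expMeasure r) t = r / (r - t) := by
  rw [mgf, integral_eq_lintegral_of_nonneg_ae (.of_forall fun x => (Real.exp_pos _).le)
    (by fun_prop)]
  simp only [id]
  rw [lintegral_exp_mul_expMeasure htr,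
    ENNReal.toReal_ofReal (div_nonneg hr (sub_pos.mpr htr).le)]

variable {Ω : Type*} {mΩ : MeasurableSpace Ω} {μ : Measure Ω} {X : Ω → ℝ}

lemma integrable_exp_mul_of_map_eq_expMeasure (hX : Measurable X)
    (hlaw : μ.map X = expMeasure r) (htr : t < r) :
    Integrable (fun ω => Real.exp (t * X ω)) μ := by
  have h := integrable_exp_mul_expMeasure htr
  rw [← hlaw] at h
  exact h.comp_measurable hX

lemma mgf_of_map_eq_expMeasure (hX : AEMeasurable X μ) (hlaw : μ.map X = expMeasure r)
    (hr : 0 ≤ r) (htr : t < r) : mgf X μ t = r / (r - t) := by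
  rw [← mgf_id_map hX, hlaw, mgf_id_expMeasure hr htr]

section Products

variable {u : ℕ → Ω → ℝ}

lemma iIndepFun.integrable_prod_range (hindep : iIndepFun u μ) (hmeas : ∀ j, Measurable (u j))
    (hint : ∀ j, Integrable (u j) μ) (n : ℕ) : Integrable (∏ j ∈ range n, u j) μ := by
  have := hindep.isProbabilityMeasure
  induction n with
  | zero => exact integrable_const (μ := μ) (1 : ℝ)
  | succ n ih =>
    rw [prod_range_succ]
    exact (hindep.indepFun_finsetProd_of_notMem hmeas notMem_range_self).integrable_mul ih
      (hint n)

theorem iIndepFun.martingale_prod_range_succ (hindep : iIndepFun u μ)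
    (hmeas : ∀ j, StronglyMeasurable (u j)) (hint : ∀ j, Integrable (u j) μ)
    (hmean : ∀ j, μ[u j] = 1) :
    Martingale (fun n => ∏ j ∈ range (n + 1), u j) (Filtration.natural u hmeas) μ := by
  have := hindep.isProbabilityMeasure
  have hmeas' : ∀ j, Measurable (u j) := fun j => (hmeas j).measurable
  have hadapted :
      StronglyAdapted (Filtration.natural u hmeas) (fun n => ∏ j ∈ range (n + 1), u j) :=
    fun n => Finset.stronglyMeasurable_prod _ fun j hj =>
      Filtration.stronglyAdapted_natural hmeas j |>.mono
        ((Filtration.natural u hmeas).mono (Nat.lt_succ_iff.mp (mem_range.mp hj)))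
  refine martingale_nat hadapted (fun n => hindep.integrable_prod_range hmeas' hint _) fun n => ?_
  have hindep_next : Indep (MeasurableSpace.comap (u (n + 1)) inferInstance)
      (Filtration.natural u hmeas n) μ := by
    have := indep_iSup_of_disjoint (fun j => (hmeas' j).comap_le) hindep
      (S := {n + 1}) (T := Set.Iic n) (by simp)
    simp only [Set.mem_singleton_iff, iSup_iSup_eq_left, Set.mem_Iic] at this
    exact this
  have hcond : μ[u (n + 1) | Filtration.natural u hmeas n] =ᵐ[μ] fun _ => 1 := by
    rw [← hmean (n + 1)]
    exact condExp_indep_eq (hmeas' _).comap_le ((Filtration.natural u hmeas).le n)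
      (comap_measurable (u (n + 1))).stronglyMeasurable hindep_next
  have hpull := condExp_mul_of_stronglyMeasurable_left (m := Filtration.natural u hmeas n)
    (hadapted n) (by simpa [prod_range_succ] using hindep.integrable_prod_range hmeas' hint (n + 2))
    (hint (n + 1))
  rw [prod_range_succ _ (n + 1)]
  filter_upwards [hpull, hcond] with ω hω h1
  simp [hω, h1]

end Products

end ProbabilityTheory

namespace MeasureTheory

variable {Ω : Type*} {mΩ : MeasurableSpace Ω} {μ : Measure Ω} [IsFiniteMeasure μ]
  {𝒢 : Filtration ℕ mΩ} {f : ℕ → Ω → ℝ}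

theorem Martingale.measure_exists_ge_le (hf : Martingale f 𝒢 μ) (hnonneg : 0 ≤ f) {ε : ℝ}
    (hε : 0 < ε) : μ {ω | ∃ n, ε ≤ f n ω} ≤ ENNReal.ofReal (μ[f 0] / ε) := by
  set A : ℕ → Set Ω := fun n =>
    {ω | ε ≤ (range (n + 1)).sup' nonempty_range_add_one fun k => f k ω}
  have hA : {ω | ∃ n, ε ≤ f n ω} = ⋃ n, A n := by
    ext ω
    simp only [A, Set.mem_ofPred_eq, Set.mem_iUnion, le_sup'_iff, mem_range]
    exact ⟨fun ⟨n, hn⟩ => ⟨n, n, n.lt_succ_self, hn⟩, fun ⟨_, k, _, hk⟩ => ⟨k, hk⟩⟩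
  have hA_mono : Monotone A := fun m n hmn ω (hω : ε ≤ _) =>
    show ε ≤ _ from hω.trans (sup'_mono _ (range_subset_range.mpr (by omega)) _)
  rw [hA, hA_mono.measure_iUnion, iSup_le_iff]
  intro n
  have hdoob := maximal_ineq hf.submartingale hnonneg (ε := ε.toNNReal) n
  have hint : ∫ ω in A n, f n ω ∂μ ≤ μ[f 0] := by
    calc ∫ ω in A n, f n ω ∂μ ≤ μ[f n] :=
          setIntegral_le_integral (hf.integrable n) (.of_forall (hnonneg n))
      _ = μ[f 0] := by
          simpa using (hf.setIntegral_eq (Nat.zero_le n) MeasurableSet.univ).symm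
  rw [Real.coe_toNNReal _ hε.le] at hdoob
  rw [ENNReal.ofReal_div_of_pos hε, ENNReal.le_div_iff_mul_le (by simp [hε]) (by simp),
    mul_comm]
  exact hdoob.trans (ENNReal.ofReal_le_ofReal hint)

end MeasureTheory

lemma Set.exists_mem_ncard_le_succ {K : Set ℕ} (hK : 0 < K.ncard) :
    ∃ i ∈ K, K.ncard ≤ i + 1 := by
  by_contra! h
  have hsub : K ⊆ ↑(Finset.range (K.ncard - 1)) := fun i hi => by
    simpa using Nat.lt_sub_of_add_lt (h i hi)
  have := Set.ncard_le_ncard hsub (finite_toSet _)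
  rw [Set.ncard_coe_finset, card_range] at this
  omega

lemma exists_sum_range_le_half_of_le_ncard {x : ℕ → ℝ} {t T : ℝ} (hT : 0 < T)
    (h : 2 * max t T ≤ ({i : ℕ | ∑ j ∈ range (i + 1), x j ≤ t}.ncard : ℝ)) :
    ∃ n : ℕ, 2 * T ≤ n + 1 ∧ ∑ j ∈ range (n + 1), x j ≤ (n + 1) / 2 := by
  have hpos : 0 < {i : ℕ | ∑ j ∈ range (i + 1), x j ≤ t}.ncard := by
    have : (0 : ℝ) < 2 * max t T := by positivity
    exact_mod_cast this.trans_le h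
  obtain ⟨n, hn, hcard⟩ := Set.exists_mem_ncard_le_succ hpos
  have hcard' : 2 * max t T ≤ n + 1 := h.trans (by exact_mod_cast hcard)
  refine ⟨n, (by linarith [le_max_right t T]), ?_⟩
  linarith [le_max_left t T, show ∑ j ∈ range (n + 1), x j ≤ t from hn]

lemma exp_div_eight_le_prod_two_mul_exp_neg {x : ℕ → ℝ} {n : ℕ}
    (h : ∑ j ∈ range n, x j ≤ n / 2) :
    Real.exp (n / 8) ≤ ∏ j ∈ range n, 2 * Real.exp (-x j) := by
  rw [prod_mul_distrib, prod_const, card_range, ← Real.exp_sum, sum_neg_distrib,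
    ← Real.rpow_natCast, Real.rpow_def_of_pos two_pos, ← Real.exp_add, Real.exp_le_exp]
  have := Real.log_two_gt_d9
  nlinarith [n.cast_nonneg (α := ℝ)]

lemma exists_exp_le_prod_two_mul_exp_neg_of_le_ncard {x : ℕ → ℝ} {t T : ℝ} (hT : 0 < T)
    (h : 2 * max t T ≤ ({i : ℕ | ∑ j ∈ range (i + 1), x j ≤ t}.ncard : ℝ)) :
    ∃ n : ℕ, Real.exp (T / 4) ≤ ∏ j ∈ range (n + 1), 2 * Real.exp (-x j) := by
  obtain ⟨n, hnT, hsum⟩ := exists_sum_range_le_half_of_le_ncard hT h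
  refine ⟨n, ?_⟩
  calc Real.exp (T / 4) ≤ Real.exp (↑(n + 1) / 8) := Real.exp_le_exp.mpr (by push_cast; linarith)
    _ ≤ ∏ j ∈ range (n + 1), 2 * Real.exp (-x j) :=
      exp_div_eight_le_prod_two_mul_exp_neg (by push_cast; exact hsum)

/-- Maximal estimate for a rate-one Poisson process built from i.i.d. exponential
interarrival times: `P(∃ t ≥ 0, N_t ≥ 2·max(t,T)) ≤ e^{−T/4}`. -/
theorem poisson_process_upper_maximal {Ω : Type*} [MeasurableSpace Ω]
    (μ : Measure Ω) [IsProbabilityMeasure μ]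
    (s : ℕ → Ω → ℝ) (hmeas : ∀ j, Measurable (s j))
    (hindep : iIndepFun s μ)
    (hdist : ∀ j, Measure.map (s j) μ = expMeasure 1)
    (N : ℝ → Ω → ℕ)
    (hN : ∀ t ω, N t ω = Set.ncard {i : ℕ | ∑ j ∈ Finset.range (i + 1), s j ω ≤ t})
    (T : ℝ) (hT : 0 < T) :
    μ {ω | ∃ t : ℝ, 0 ≤ t ∧ 2 * max t T ≤ (N t ω : ℝ)} ≤
      ENNReal.ofReal (Real.exp (-T / 4)) := by
  set u : ℕ → Ω → ℝ := fun j ω => 2 * Real.exp (-s j ω)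
  have hu_meas : ∀ j, Measurable (u j) := fun j => by fun_prop
  have hu_int : ∀ j, Integrable (u j) μ := fun j => by
    simpa using ((integrable_exp_mul_of_map_eq_expMeasure (hmeas j) (hdist j)
      (t := -1) (by norm_num)).const_mul 2)
  have hu_mean : ∀ j, μ[u j] = 1 := fun j => by
    have h := mgf_of_map_eq_expMeasure (hmeas j).aemeasurable (hdist j) zero_le_one
      (t := -1) (by norm_num)
    simp only [mgf, neg_one_mul] at h
    simp only [u, integral_const_mul, h]
    norm_num
  have hu_indep : iIndepFun u μ :=
    hindep.comp (fun _ x => 2 * Real.exp (-x)) fun _ => by fun_prop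
  have hmart := hu_indep.martingale_prod_range_succ (fun j => (hu_meas j).stronglyMeasurable)
    hu_int hu_mean
  have hsub : {ω | ∃ t : ℝ, 0 ≤ t ∧ 2 * max t T ≤ (N t ω : ℝ)} ⊆
      {ω | ∃ n, Real.exp (T / 4) ≤ (∏ j ∈ range (n + 1), u j) ω} := by
    rintro ω ⟨t, -, ht⟩
    rw [hN] at ht
    obtain ⟨n, hn⟩ := exists_exp_le_prod_two_mul_exp_neg_of_le_ncard hT ht
    exact ⟨n, by rwa [prod_apply]⟩
  calc μ _ ≤ μ {ω | ∃ n, Real.exp (T / 4) ≤ (∏ j ∈ range (n + 1), u j) ω} := measure_mono hsub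
    _ ≤ ENNReal.ofReal (μ[∏ j ∈ range (0 + 1), u j] / Real.exp (T / 4)) :=
        hmart.measure_exists_ge_le (fun n ω => by
          simp only [Pi.zero_apply, prod_apply]
          exact prod_nonneg fun j _ => by positivity) (Real.exp_pos _)
    _ = ENNReal.ofReal (Real.exp (-T / 4)) := by
        rw [Finset.prod_range_one, hu_mean, one_div, ← Real.exp_neg, neg_div]
end

section
/- Let x, y : [0, ∞) → ℝ be differentiable functions satisfying, for all t ≥ 0, x'(t) = x(t)·z(t) + z(t)² − x(t)·y(t) and y'(t) = y(t)·z(t) + z(t)² − x(t)·y(t), where z(t) := 1 − x(t) − y(t). If x(0) ≥ 0, y(0) ≥ 0 and x(0) + y(0) ≤ 1, then for all t ≥ 0 one has x(t) ≥ 0, y(t) ≥ 0 and x(t) + y(t) ≤ 1. -/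
/-!
Each coordinate of the vector field is linear in itself plus a nonnegative source:
`x' = (z - y) x + z²`, `y' = (z - x) y + z²` and `z' = (x + y - 2) z + 2xy` for `z = 1 - x - y`.
A function with `f' ≥ g f` for continuous `g` and `f(0) ≥ 0` stays nonnegative. This gives
`x, y ≥ 0` directly, and then `z ≥ 0`, since the source `2xy` is nonnegative once `x, y` are.
-/

open Real Set

theorem nonneg_of_const_mul_le_deriv_of_neg {f f' : ℝ → ℝ} {a b K : ℝ}
    (hf : ContinuousOn f (Icc a b)) (hf' : ∀ t ∈ Ico a b, HasDerivWithinAt f (f' t) (Ici t) t)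
    (ha : 0 ≤ f a) (hK : ∀ t ∈ Ico a b, f t < 0 → K * f t ≤ f' t) :
    ∀ t ∈ Icc a b, 0 ≤ f t := by
  intro t ht
  -- Where `-f` touches the barrier `B s = ε e^{(K + 1)(s - a)}`, `f < 0`, so `-f' ≤ K B < B'`.
  have barrier : ∀ ε > 0, -f t ≤ ε * exp ((K + 1) * (t - a)) := by
    intro ε hε
    have hB : ∀ s, HasDerivAt (fun s => ε * exp ((K + 1) * (s - a)))
        ((K + 1) * (ε * exp ((K + 1) * (s - a)))) s := fun s =>
      ((((hasDerivAt_id s).sub_const a).const_mul (K + 1)).exp.const_mul ε).congr_deriv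
        (by simp only [id, mul_one]; ring)
    refine image_le_of_deriv_right_lt_deriv_boundary hf.neg (fun s hs => (hf' s hs).neg)
      (by simp only [Pi.neg_apply, sub_self, mul_zero, exp_zero, mul_one]; linarith) hB
      (fun s hs hfs => ?_) ht
    rw [Pi.neg_apply] at hfs
    have hpos : 0 < ε * exp ((K + 1) * (s - a)) := by positivity
    have := hK s hs (by linarith)
    rw [← hfs]
    nlinarith
  refine neg_nonpos.mp (le_of_forall_pos_le_add fun ε hε => ?_)
  have hexp := exp_pos ((K + 1) * (t - a))
  simpa [div_mul_cancel₀ _ hexp.ne'] using barrier (ε / exp ((K + 1) * (t - a))) (by positivity)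

theorem nonneg_of_mul_le_deriv {f f' g : ℝ → ℝ} {a b : ℝ}
    (hf : ContinuousOn f (Icc a b)) (hf' : ∀ t ∈ Ico a b, HasDerivWithinAt f (f' t) (Ici t) t)
    (hg : ContinuousOn g (Icc a b)) (ha : 0 ≤ f a) (hfg : ∀ t ∈ Ico a b, g t * f t ≤ f' t) :
    ∀ t ∈ Icc a b, 0 ≤ f t := by
  obtain ⟨K, hK⟩ := isCompact_Icc.bddAbove_image hg
  refine nonneg_of_const_mul_le_deriv_of_neg (K := K) hf hf' ha fun t ht hft => ?_
  calc K * f t ≤ g t * f t :=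
        mul_le_mul_of_nonpos_right (hK (mem_image_of_mem g (Ico_subset_Icc_self ht))) hft.le
    _ ≤ f' t := hfg t ht

theorem nonneg_of_mul_le_deriv_Ici {f f' g : ℝ → ℝ} {a : ℝ}
    (hf : ∀ t, a ≤ t → HasDerivAt f (f' t) t) (hg : ContinuousOn g (Ici a)) (ha : 0 ≤ f a)
    (hfg : ∀ t, a ≤ t → g t * f t ≤ f' t) : ∀ t, a ≤ t → 0 ≤ f t := fun t ht =>
  nonneg_of_mul_le_deriv (b := t) (fun s hs => (hf s hs.1).continuousAt.continuousWithinAt)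
    (fun s hs => (hf s hs.1).hasDerivWithinAt) (hg.mono Icc_subset_Ici_self) ha
    (fun s hs => hfg s hs.1) t ⟨ht, le_rfl⟩

/-- Invariance of the simplex `{x ≥ 0, y ≥ 0, x + y ≤ 1}` under the mean-field ODE
`x' = xz + z² − xy`, `y' = yz + z² − xy` with `z = 1 − x − y`. -/
theorem simplex_invariant (x y : ℝ → ℝ)
    (hx : ∀ t : ℝ, 0 ≤ t → HasDerivAt x
      (x t * (1 - x t - y t) + (1 - x t - y t) ^ 2 - x t * y t) t)
    (hy : ∀ t : ℝ, 0 ≤ t → HasDerivAt y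
      (y t * (1 - x t - y t) + (1 - x t - y t) ^ 2 - x t * y t) t)
    (hx0 : 0 ≤ x 0) (hy0 : 0 ≤ y 0) (hsum0 : x 0 + y 0 ≤ 1) :
    ∀ t : ℝ, 0 ≤ t → 0 ≤ x t ∧ 0 ≤ y t ∧ x t + y t ≤ 1 := by
  have hcx : ContinuousOn x (Ici 0) := fun t ht => (hx t ht).continuousAt.continuousWithinAt
  have hcy : ContinuousOn y (Ici 0) := fun t ht => (hy t ht).continuousAt.continuousWithinAt
  have hx_nonneg := nonneg_of_mul_le_deriv_Ici hx (g := fun t => 1 - x t - 2 * y t)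
    (by fun_prop) hx0 fun t _ => by nlinarith [sq_nonneg (1 - x t - y t)]
  have hy_nonneg := nonneg_of_mul_le_deriv_Ici hy (g := fun t => 1 - 2 * x t - y t)
    (by fun_prop) hy0 fun t _ => by nlinarith [sq_nonneg (1 - x t - y t)]
  have hz_nonneg := nonneg_of_mul_le_deriv_Ici (f := fun t => 1 - x t - y t)
    (fun t ht => ((hasDerivAt_const t 1).sub (hx t ht)).sub (hy t ht))
    (g := fun t => x t + y t - 2) (by fun_prop) (by linarith)
    fun t ht => by nlinarith [mul_nonneg (hx_nonneg t ht) (hy_nonneg t ht)]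
  intro t ht
  exact ⟨hx_nonneg t ht, hy_nonneg t ht, by linarith [hz_nonneg t ht]⟩
end

section
/- Let z : [0, ∞) → ℝ be a differentiable function satisfying z'(t) = (1/2)·(1 − 4·z(t) − z(t)²) for all t ≥ 0, with z(0) ∈ [0, 1]. Then z(t) converges to z* = −2 + √5 as t → ∞. -/
/-!
Since the vector field is positive at `0`, the solution never leaves `[0, ∞)`. Writing
`z* = -2 + √5`, the field factors as `-(1/2)(z - z*)(z + 2 + √5)`, so the Lyapunov function
`(z - z*)²` has derivative `-(z + 2 + √5)(z - z*)² ≤ -4 (z - z*)²` while `z ≥ 0`, and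
Grönwall's inequality makes it decay like `e^{-4t}`.
-/

open Set Filter Real Topology

theorem le_of_hasDerivAt_of_pos_at_level {f z : ℝ → ℝ} {c : ℝ}
    (hz : ∀ t, 0 ≤ t → HasDerivAt z (f (z t)) t) (hc : 0 < f c) (h0 : c ≤ z 0) :
    ∀ t, 0 ≤ t → c ≤ z t := by
  intro t ht
  have hcont : ContinuousOn z (Icc 0 t) := fun x hx =>
    (hz x hx.1).continuousAt.continuousWithinAt
  refine image_le_of_deriv_right_lt_deriv_boundary' continuousOn_const
    (fun x _ => hasDerivWithinAt_const x _ c) h0 hcont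
    (fun x hx => (hz x hx.1).hasDerivWithinAt) (fun x _ hx => ?_) ⟨ht, le_rfl⟩
  rwa [← hx]

theorem le_mul_exp_of_hasDerivAt_le_mul {w w' : ℝ → ℝ} {K : ℝ}
    (hw : ∀ t, 0 ≤ t → HasDerivAt w (w' t) t) (hbound : ∀ t, 0 ≤ t → w' t ≤ K * w t) :
    ∀ t, 0 ≤ t → w t ≤ w 0 * exp (K * t) := by
  intro t ht
  have hcont : ContinuousOn w (Icc 0 t) := fun x hx =>
    (hw x hx.1).continuousAt.continuousWithinAt
  have := le_gronwallBound_of_liminf_deriv_right_le (ε := 0) hcont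
    (fun x hx _ hr => (hw x hx.1).hasDerivWithinAt.liminf_right_slope_le hr) le_rfl
    (fun x hx => by simpa using hbound x hx.1) t ⟨ht, le_rfl⟩
  rwa [gronwallBound_ε0, sub_zero] at this

theorem tendsto_zero_of_hasDerivAt_le_neg_mul {w w' : ℝ → ℝ} {k : ℝ} (hk : 0 < k)
    (hw0 : ∀ t, 0 ≤ t → 0 ≤ w t) (hw : ∀ t, 0 ≤ t → HasDerivAt w (w' t) t)
    (hbound : ∀ t, 0 ≤ t → w' t ≤ -k * w t) :
    Tendsto w atTop (𝓝 0) := by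
  have hexp : Tendsto (fun t => w 0 * exp (-k * t)) atTop (𝓝 0) := by
    simpa using (tendsto_exp_atBot.comp
      (tendsto_id.const_mul_atTop_of_neg (neg_neg_of_pos hk))).const_mul (w 0)
  refine squeeze_zero' ?_ ?_ hexp
  · filter_upwards [eventually_ge_atTop 0] using hw0
  · filter_upwards [eventually_ge_atTop 0] using le_mul_exp_of_hasDerivAt_le_mul hw hbound

theorem tendsto_of_tendsto_sq_sub {α : Type*} {l : Filter α} {f : α → ℝ} {c : ℝ}
    (h : Tendsto (fun x => (f x - c) ^ 2) l (𝓝 0)) : Tendsto f l (𝓝 c) := by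
  have habs : Tendsto (fun x => |f x - c|) l (𝓝 0) := by
    simpa [sqrt_sq_eq_abs] using h.sqrt
  simpa using ((tendsto_zero_iff_abs_tendsto_zero _).2 habs).add_const c

theorem half_mul_one_sub_four_mul_sub_sq_eq (x : ℝ) :
    1 / 2 * (1 - 4 * x - x ^ 2) = -(1 / 2) * (x - (-2 + √5)) * (x + 2 + √5) := by
  linear_combination -(1 / 2 : ℝ) * sq_sqrt (show (0 : ℝ) ≤ 5 by norm_num)

/-- For the ODE `z' = (1/2)(1 − 4z − z²)` with `z(0) ∈ [0,1]`,
`z(t) → z* = −2 + √5` as `t → ∞`. -/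
theorem z_tendsto_fixed_point (z : ℝ → ℝ)
    (hz : ∀ t : ℝ, 0 ≤ t →
      HasDerivAt z ((1 / 2) * (1 - 4 * z t - (z t) ^ 2)) t)
    (hz0 : z 0 ∈ Set.Icc (0:ℝ) 1) :
    Filter.Tendsto z Filter.atTop (nhds (-2 + Real.sqrt 5)) := by
  have hnonneg : ∀ t, 0 ≤ t → 0 ≤ z t :=
    le_of_hasDerivAt_of_pos_at_level (f := fun x => 1 / 2 * (1 - 4 * x - x ^ 2)) hz
      (by norm_num) hz0.1
  have hlyapunov : ∀ t, 0 ≤ t → HasDerivAt (fun t => (z t - (-2 + √5)) ^ 2)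
      (-(z t + 2 + √5) * (z t - (-2 + √5)) ^ 2) t := fun t ht => by
    refine (((hz t ht).sub_const (-2 + √5)).pow 2).congr_deriv ?_
    rw [half_mul_one_sub_four_mul_sub_sq_eq]
    push_cast
    ring
  refine tendsto_of_tendsto_sq_sub (tendsto_zero_of_hasDerivAt_le_neg_mul four_pos
    (fun t _ => sq_nonneg _) hlyapunov fun t ht => ?_)
  have hrate : 4 ≤ z t + 2 + √5 := by
    nlinarith [hnonneg t ht, sq_sqrt (show (0 : ℝ) ≤ 5 by norm_num), sqrt_nonneg 5]
  nlinarith [sq_nonneg (z t - (-2 + √5))]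
end

section
/- Let u, z : [0, ∞) → ℝ be differentiable functions satisfying, for all t ≥ 0, u'(t) = u(t)·z(t) and z'(t) = (1/2)·(1 − u(t)² − 4·z(t) − z(t)²), with initial conditions u(0) ∈ (0, 1], z(0) ≥ 0, and u(0) + z(0) ≤ 1. Then for all t ≥ 0 one has u(t) ∈ (0, 1], z(t) ≥ 0 and u(t) + z(t) ≤ 1; the function u is nondecreasing; and u(t) → 1 as t → ∞. -/
/-!
Each constraint is preserved by an integrating factor: `u`, `w = 1 - u - z` and `z` each satisfy a
linear equation `f' = f g + h` with `h ≥ 0` as long as the previously established constraints hold,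
namely `u' = u z`, `w' = w (2z + w/2 - 1) + 2z²` and `z' = -z (1 + z) + w (u + w/2)`, so their signs
at `t = 0` persist. Hence `u' = uz ≥ 0`. If `u` stayed below some `L < 1`, then
`z' ≥ (1 - L²)/2 - 5z/2` and `u' ≥ u(0) z` would make `z + 5u / (2u(0))` grow linearly,
contradicting `u + z ≤ 1`.
-/

open Set Filter Topology Real

theorem monotoneOn_Ici_of_hasDerivAt_nonneg {f f' : ℝ → ℝ} {a : ℝ}
    (hf : ∀ t, a ≤ t → HasDerivAt f (f' t) t) (hf' : ∀ t, a ≤ t → 0 ≤ f' t) :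
    MonotoneOn f (Ici a) := by
  refine monotoneOn_of_hasDerivWithinAt_nonneg (f' := f') (convex_Ici a)
    (fun t ht => (hf t ht).continuousAt.continuousWithinAt) (fun t ht => ?_) (fun t ht => ?_)
  · rw [interior_Ici] at ht
    exact (hf t ht.le).hasDerivWithinAt
  · rw [interior_Ici] at ht
    exact hf' t ht.le

theorem exists_hasDerivAt_of_continuousOn_Ici {g : ℝ → ℝ} {a : ℝ} (hg : ContinuousOn g (Ici a)) :
    ∃ A : ℝ → ℝ, A a = 0 ∧ ∀ t, a ≤ t → HasDerivAt A (g t) t := by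
  have hcont : Continuous fun s => g (max s a) :=
    hg.comp_continuous (continuous_id.max continuous_const) fun s => le_max_right s a
  refine ⟨fun t => ∫ s in a..t, g (max s a), intervalIntegral.integral_same, fun t ht => ?_⟩
  simpa [max_eq_left ht] using (hcont.integral_hasStrictDerivAt a t).hasDerivAt

theorem exists_mul_exp_le_of_hasDerivAt_eq_mul_add {f g h : ℝ → ℝ} {a : ℝ}
    (hg : ContinuousOn g (Ici a)) (hf : ∀ t, a ≤ t → HasDerivAt f (f t * g t + h t) t)
    (hh : ∀ t, a ≤ t → 0 ≤ h t) :
    ∃ A : ℝ → ℝ, ∀ t, a ≤ t → f a * exp (A t) ≤ f t := by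
  obtain ⟨A, hA0, hA⟩ := exists_hasDerivAt_of_continuousOn_Ici hg
  have hmono : MonotoneOn (fun t => f t * exp (-A t)) (Ici a) := by
    refine monotoneOn_Ici_of_hasDerivAt_nonneg (f' := fun t => h t * exp (-A t)) (fun t ht => ?_)
      (fun t ht => mul_nonneg (hh t ht) (exp_pos _).le)
    exact ((hf t ht).fun_mul (hA t ht).fun_neg.exp).congr_deriv (by ring)
  refine ⟨A, fun t ht => ?_⟩
  have hat := hmono self_mem_Ici ht ht
  simp only [hA0, neg_zero, exp_zero, mul_one] at hat
  calc f a * exp (A t) ≤ f t * exp (-A t) * exp (A t) := by gcongr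
    _ = f t := by rw [mul_assoc, ← exp_add, neg_add_cancel, exp_zero, mul_one]

theorem nonneg_of_hasDerivAt_eq_mul_add {f g h : ℝ → ℝ} {a : ℝ}
    (hg : ContinuousOn g (Ici a)) (hf : ∀ t, a ≤ t → HasDerivAt f (f t * g t + h t) t)
    (hh : ∀ t, a ≤ t → 0 ≤ h t) (ha : 0 ≤ f a) : ∀ t, a ≤ t → 0 ≤ f t := by
  obtain ⟨A, hA⟩ := exists_mul_exp_le_of_hasDerivAt_eq_mul_add hg hf hh
  exact fun t ht => (mul_nonneg ha (exp_pos _).le).trans (hA t ht)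

theorem pos_of_hasDerivAt_eq_mul {f g : ℝ → ℝ} {a : ℝ}
    (hg : ContinuousOn g (Ici a)) (hf : ∀ t, a ≤ t → HasDerivAt f (f t * g t) t)
    (ha : 0 < f a) : ∀ t, a ≤ t → 0 < f t := by
  obtain ⟨A, hA⟩ := exists_mul_exp_le_of_hasDerivAt_eq_mul_add (h := 0) hg
    (by simpa using hf) fun _ _ => le_rfl
  exact fun t ht => (mul_pos ha (exp_pos _)).trans_le (hA t ht)

theorem tendsto_atTop_of_monotoneOn_Ici {f : ℝ → ℝ} {a b : ℝ} (hmono : MonotoneOn f (Ici a))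
    (hle : ∀ t, a ≤ t → f t ≤ b) (hgt : ∀ c < b, ∃ t, a ≤ t ∧ c < f t) :
    Tendsto f atTop (𝓝 b) := by
  refine tendsto_order.2 ⟨fun c hc => ?_, fun c hc => ?_⟩
  · obtain ⟨t₀, ht₀, hlt⟩ := hgt c hc
    filter_upwards [eventually_ge_atTop t₀] with t ht
    exact hlt.trans_le (hmono ht₀ (ht₀.trans ht) ht)
  · filter_upwards [eventually_ge_atTop a] with t ht
    exact (hle t ht).trans_lt hc

section NamingGame

variable {u z : ℝ → ℝ}

theorem consensus_ode_invariant (hu : ∀ t : ℝ, 0 ≤ t → HasDerivAt u (u t * z t) t)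
    (hz : ∀ t : ℝ, 0 ≤ t → HasDerivAt z ((1 / 2) * (1 - (u t) ^ 2 - 4 * z t - (z t) ^ 2)) t)
    (hu0 : 0 < u 0) (hz0 : 0 ≤ z 0) (hsum0 : u 0 + z 0 ≤ 1) (t : ℝ) (ht : 0 ≤ t) :
    0 < u t ∧ 0 ≤ z t ∧ u t + z t ≤ 1 := by
  have hcu : ContinuousOn u (Ici 0) := fun t ht => (hu t ht).continuousAt.continuousWithinAt
  have hcz : ContinuousOn z (Ici 0) := fun t ht => (hz t ht).continuousAt.continuousWithinAt
  have hupos : ∀ t, 0 ≤ t → 0 < u t := pos_of_hasDerivAt_eq_mul hcz hu hu0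
  have hw : ∀ t, 0 ≤ t → 0 ≤ 1 - u t - z t := by
    refine nonneg_of_hasDerivAt_eq_mul_add (g := fun t => 2 * z t + (1 - u t - z t) / 2 - 1)
      (h := fun t => 2 * z t ^ 2) (by fun_prop) (fun t ht => ?_) (fun t _ => by positivity)
      (by linarith)
    exact (((hasDerivAt_const t 1).fun_sub (hu t ht)).fun_sub (hz t ht)).congr_deriv (by ring)
  have hznn : ∀ t, 0 ≤ t → 0 ≤ z t := by
    refine nonneg_of_hasDerivAt_eq_mul_add (g := fun t => -(1 + z t))
      (h := fun t => (1 - u t - z t) * (u t + (1 - u t - z t) / 2)) (by fun_prop)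
      (fun t ht => ?_) (fun t ht => ?_) hz0
    · exact (hz t ht).congr_deriv (by ring)
    · have := hupos t ht
      have := hw t ht
      positivity
  exact ⟨hupos t ht, hznn t ht, by linarith [hw t ht]⟩

theorem consensus_ode_exists_gt (hu : ∀ t : ℝ, 0 ≤ t → HasDerivAt u (u t * z t) t)
    (hz : ∀ t : ℝ, 0 ≤ t → HasDerivAt z ((1 / 2) * (1 - (u t) ^ 2 - 4 * z t - (z t) ^ 2)) t)
    (hinv : ∀ t, 0 ≤ t → 0 < u t ∧ 0 ≤ z t ∧ u t + z t ≤ 1) (hmono : MonotoneOn u (Ici 0))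
    (L : ℝ) (hL : L < 1) : ∃ t, 0 ≤ t ∧ L < u t := by
  by_contra! hle
  have hu0 := (hinv 0 le_rfl).1
  have hL0 : 0 < L := hu0.trans_le (hle 0 le_rfl)
  obtain ⟨c, hc, hcL⟩ : ∃ c, 0 < c ∧ L ^ 2 + 2 * c ≤ 1 := ⟨(1 - L ^ 2) / 2, by nlinarith, by linarith⟩
  obtain ⟨k, hku0⟩ : ∃ k, k * u 0 = 5 / 2 := ⟨5 / (2 * u 0), by field_simp⟩
  have hk : 0 < k := pos_of_mul_pos_left (by linarith : 0 < k * u 0) hu0.le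
  have hΦ : MonotoneOn (fun t => z t + k * u t - c * t) (Ici 0) := by
    refine monotoneOn_Ici_of_hasDerivAt_nonneg
      (fun t ht => ((hz t ht).add ((hu t ht).const_mul k)).sub ((hasDerivAt_id t).const_mul c))
      (fun t ht => ?_)
    obtain ⟨hut, hzt, hsum⟩ := hinv t ht
    have hkuz : 5 / 2 * z t ≤ k * (u t * z t) := by
      rw [← hku0, mul_assoc]
      gcongr
      exact hmono self_mem_Ici ht ht
    have hu2 : u t ^ 2 ≤ L ^ 2 := pow_le_pow_left₀ hut.le (hle t ht) 2
    have hz2 : z t ^ 2 ≤ z t := by nlinarith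
    linarith
  have hT : 0 ≤ (1 + k) / c + 1 := by positivity
  have hΦT := hΦ self_mem_Ici hT hT
  obtain ⟨huT, hzT, hsumT⟩ := hinv _ hT
  have hkuT : k * u ((1 + k) / c + 1) ≤ k := mul_le_of_le_one_right hk.le (by linarith)
  have hcT : c * ((1 + k) / c + 1) = 1 + k + c := by field_simp
  simp only [hcT, mul_zero, sub_zero] at hΦT
  linarith [(hinv 0 le_rfl).2.1]

end NamingGame

/-- For the mean-field system `u' = uz`, `z' = (1/2)(1 − u² − 4z − z²)` with
`u(0) ∈ (0,1]`, `z(0) ≥ 0`, `u(0) + z(0) ≤ 1`: the region is invariant, `u` is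
nondecreasing on `[0,∞)`, and `u(t) → 1` as `t → ∞`. -/
theorem consensus_ode (u z : ℝ → ℝ)
    (hu : ∀ t : ℝ, 0 ≤ t → HasDerivAt u (u t * z t) t)
    (hz : ∀ t : ℝ, 0 ≤ t →
      HasDerivAt z ((1 / 2) * (1 - (u t) ^ 2 - 4 * z t - (z t) ^ 2)) t)
    (hu0 : u 0 ∈ Set.Ioc (0:ℝ) 1) (hz0 : 0 ≤ z 0) (hsum0 : u 0 + z 0 ≤ 1) :
    (∀ t : ℝ, 0 ≤ t → u t ∈ Set.Ioc (0:ℝ) 1 ∧ 0 ≤ z t ∧ u t + z t ≤ 1) ∧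
    MonotoneOn u (Set.Ici 0) ∧
    Filter.Tendsto u Filter.atTop (nhds 1) := by
  have hinv := consensus_ode_invariant hu hz hu0.1 hz0 hsum0
  have hle : ∀ t, 0 ≤ t → u t ≤ 1 := fun t ht => by linarith [hinv t ht]
  have hmono : MonotoneOn u (Ici 0) :=
    monotoneOn_Ici_of_hasDerivAt_nonneg hu fun t ht => mul_nonneg (hinv t ht).1.le (hinv t ht).2.1
  refine ⟨fun t ht => ⟨⟨(hinv t ht).1, hle t ht⟩, (hinv t ht).2⟩, hmono, ?_⟩
  exact tendsto_atTop_of_monotoneOn_Ici hmono hle (consensus_ode_exists_gt hu hz hinv hmono)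
end
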